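/- arXiv:2412.06381 — 2 statements merged into one kernel-verified Lean document; each statement's English description precedes it below -/
import Mathlib

section
/- (Local Sensitivity generalization bound.) Let A map each dataset S \in Z^n to a model h = A(S) whose loss \ell_h is measurable with values in [0, C] where C = \sup_{z \in Z} \ell_h(z). For S consisting of n i.i.d. samples from P and any \delta > 0, with probability at least 1 - \delta over the draw of S: F(P,h) \le C(\sqrt{2}+1) \sqrt{ |T_S| \ln(2K/\delta) / n } + 2 C |T_S| \ln(2K/\delta) / n + F(S,h) + \sum_{i \in T_S} (n_i/n) \bar{\epsilon}_i(h). -/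
open MeasureTheory Finset

open scoped Classical in
/-- Number of sample points of `S` falling in the region `A`. -/
noncomputable def cnt {Z : Type*} {n : ℕ} (S : Fin n → Z) (A : Set Z) : ℕ :=
  (Finset.univ.filter (fun j => S j ∈ A)).card

/-- Indices of the regions that contain at least one sample point. -/
noncomputable def Tset {Z : Type*} {n K : ℕ} (S : Fin n → Z) (Zpart : Fin K → Set Z) :
    Finset (Fin K) :=
  Finset.univ.filter (fun i => 0 < cnt S (Zpart i))

/-- Empirical loss of `ℓ` on the sample `S`. -/
noncomputable def empLoss {Z : Type*} {n : ℕ} (ℓ : Z → ℝ) (S : Fin n → Z) : ℝ :=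
  (∑ j, ℓ (S j)) / n

open scoped Classical in
/-- Empirical loss of `ℓ` on the subsample of `S` lying in `A`. -/
noncomputable def empLossIn {Z : Type*} {n : ℕ} (ℓ : Z → ℝ) (S : Fin n → Z) (A : Set Z) : ℝ :=
  (∑ j ∈ Finset.univ.filter (fun j => S j ∈ A), ℓ (S j)) / (cnt S A : ℝ)

/-- Conditional expectation `E[ℓ z ∣ z ∈ A]`. -/
noncomputable def condAvg {Z : Type*} [MeasurableSpace Z] (P : Measure Z) (ℓ : Z → ℝ)
    (A : Set Z) : ℝ :=
  (∫ z in A, ℓ z ∂P) / (P A).toReal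

/-- Worst-case local robustness level `sup_{s ∈ S ∩ A, z ∈ A} |ℓ s - ℓ z|`. -/
noncomputable def epsSup {Z : Type*} {n : ℕ} (ℓ : Z → ℝ) (S : Fin n → Z) (A : Set Z) : ℝ :=
  sSup {x : ℝ | ∃ j : Fin n, S j ∈ A ∧ ∃ z ∈ A, x = |ℓ (S j) - ℓ z|}

open scoped Classical in
/-- Average local sensitivity `(1/n_i) ∑_{s ∈ S ∩ A} E[|ℓ z - ℓ s| ∣ z ∈ A]`. -/
noncomputable def epsBar {Z : Type*} [MeasurableSpace Z] {n : ℕ} (P : Measure Z) (ℓ : Z → ℝ)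
    (S : Fin n → Z) (A : Set Z) : ℝ :=
  (∑ j ∈ Finset.univ.filter (fun j => S j ∈ A),
    condAvg P (fun z => |ℓ z - ℓ (S j)|) A) / (cnt S A : ℝ)

/-!
For each region `Z_i` the count `n_i` is binomial with mean `n p_i`, `p_i = P(Z_i)`, so a Chernoff
bound gives `n_i ≤ n p_i + 2√(n p_i L) + 2L` outside an event of probability `e^{-L}`; with
`L = log (2K/δ)` a union bound makes this hold for all regions with probability at least `1 - δ/2`.
On that event the argument is deterministic. Writing `c_i = E[ℓ | Z_i] ∈ [0, C]`,
`F(P,h) = ∑ p_i c_i ≤ ∑ (n_i/n) c_i + C ∑ (n_i/n - p_i)⁺`, because the positive and negative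
parts of `p - n_•/n` have the same mass. For every sample point `s ∈ Z_i`,
`c_i ≤ ℓ(s) + E[|ℓ - ℓ(s)| | Z_i]`, which bounds the first sum by the empirical loss plus the
sensitivity term; the Chernoff event and Cauchy–Schwarz bound the second sum by
`2√(|T_S| L/n) + 2|T_S| L/n`, and `2 ≤ √2 + 1` absorbs the constant.
-/

open Real ProbabilityTheory

section Counting

variable {Z : Type*} {n : ℕ}

open scoped Classical in
lemma cnt_eq_sum_indicator (S : Fin n → Z) (A : Set Z) :
    (cnt S A : ℝ) = ∑ j, A.indicator 1 (S j) := by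
  rw [cnt, Finset.natCast_card_filter]
  simp [Set.indicator_apply]

lemma measurable_cnt [MeasurableSpace Z] {A : Set Z} (hA : MeasurableSet A) :
    Measurable fun S : Fin n → Z => (cnt S A : ℝ) := by
  simp only [cnt_eq_sum_indicator]
  exact Finset.measurable_sum _ fun j _ =>
    (measurable_const.indicator hA).comp (measurable_pi_apply j)

lemma cnt_le (S : Fin n → Z) (A : Set Z) : cnt S A ≤ n := by
  classical
  simpa [cnt] using Finset.card_filter_le Finset.univ (fun j => S j ∈ A)

end Counting

noncomputable def chernoffBound (m L : ℝ) : ℝ := m + 2 * √(m * L) + 2 * L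

lemma exists_exponent_chernoffBound {m L : ℝ} (hm : 0 ≤ m) (hL : 0 ≤ L) :
    ∃ t : ℝ, 0 ≤ t ∧ m * (exp t - 1) - t * chernoffBound m L ≤ -L := by
  have hexp : ∀ t : ℝ, 0 ≤ t → t ≤ 1 → exp t - 1 ≤ t + t ^ 2 := fun t h0 h1 => by
    have := (abs_le.mp (abs_exp_sub_one_sub_id_le (abs_le.mpr ⟨by linarith, h1⟩))).2
    linarith
  have hsqrt := sqrt_nonneg (m * L)
  rcases le_or_gt m L with hmL | hLm
  · refine ⟨1, zero_le_one, ?_⟩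
    have h1 := hexp 1 zero_le_one le_rfl
    have h2 : m ≤ √(m * L) := le_sqrt_of_sq_le (by nlinarith)
    unfold chernoffBound
    nlinarith
  · -- `t = √(L/m)` balances the quadratic term `m t²` against `L`
    have hm : 0 < m := hL.trans_lt hLm
    set t := √(L / m)
    have ht2 : m * t ^ 2 = L := by
      rw [sq_sqrt (div_nonneg hL hm.le)]; field_simp
    have ht1 : t ≤ 1 := sqrt_le_one.mpr ((div_le_one hm).mpr hLm.le)
    have htL : t * √(m * L) = L := by
      rw [← sqrt_mul (div_nonneg hL hm.le), show L / m * (m * L) = L ^ 2 by field_simp,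
        sqrt_sq hL]
    refine ⟨t, sqrt_nonneg _, ?_⟩
    have h1 := hexp t (sqrt_nonneg _) ht1
    unfold chernoffBound
    nlinarith [mul_nonneg (sqrt_nonneg (L / m)) hL]

section Chernoff

variable {Z : Type*} [MeasurableSpace Z] (P : Measure Z) [IsProbabilityMeasure P] {n : ℕ}

lemma integral_exp_mul_indicator {A : Set Z} (hA : MeasurableSet A) (t : ℝ) :
    ∫ z, exp (t * A.indicator 1 z) ∂P = 1 + (P A).toReal * (exp t - 1) := by
  have h : (fun z => exp (t * A.indicator 1 z))
      = fun z => 1 + A.indicator (fun _ => exp t - 1) z := by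
    funext z
    by_cases hz : z ∈ A <;> simp [hz]
  rw [h, integral_add (integrable_const 1) ((integrable_const _).indicator hA),
    integral_const, integral_indicator_const _ hA]
  simp [measureReal_def]

lemma mgf_cnt {A : Set Z} (hA : MeasurableSet A) (t : ℝ) :
    mgf (fun S : Fin n → Z => (cnt S A : ℝ)) (Measure.pi fun _ => P) t
      = (1 + (P A).toReal * (exp t - 1)) ^ n := by
  simp only [mgf, cnt_eq_sum_indicator, Finset.mul_sum, exp_sum]
  rw [integral_fintype_prod_eq_pow (fun z => exp (t * A.indicator 1 z)),
    integral_exp_mul_indicator P hA, Fintype.card_fin]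

lemma mgf_cnt_le {A : Set Z} (hA : MeasurableSet A) {t : ℝ} (ht : 0 ≤ t) :
    mgf (fun S : Fin n → Z => (cnt S A : ℝ)) (Measure.pi fun _ => P) t
      ≤ exp (n * (P A).toReal * (exp t - 1)) := by
  have hx : 0 ≤ (P A).toReal * (exp t - 1) :=
    mul_nonneg ENNReal.toReal_nonneg (by linarith [one_le_exp ht])
  rw [mgf_cnt P hA, mul_assoc, exp_nat_mul]
  gcongr
  linarith [add_one_le_exp ((P A).toReal * (exp t - 1))]

lemma measure_cnt_ge_le {A : Set Z} (hA : MeasurableSet A) {t : ℝ} (ht : 0 ≤ t) (ε : ℝ) :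
    (Measure.pi fun _ : Fin n => P) {S | ε ≤ (cnt S A : ℝ)}
      ≤ ENNReal.ofReal (exp (n * (P A).toReal * (exp t - 1) - t * ε)) := by
  have hint : Integrable (fun S : Fin n → Z => exp (t * cnt S A)) (Measure.pi fun _ => P) := by
    refine (integrable_const (exp (t * n))).mono'
      ((measurable_cnt hA).const_mul t).exp.aestronglyMeasurable
      (Filter.Eventually.of_forall fun S => ?_)
    rw [norm_of_nonneg (exp_pos _).le, exp_le_exp]
    exact mul_le_mul_of_nonneg_left (by exact_mod_cast cnt_le S A) ht
  rw [← ENNReal.ofReal_toReal (measure_ne_top _ _)]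
  refine ENNReal.ofReal_le_ofReal ((measure_ge_le_exp_mul_mgf ε ht hint).trans ?_)
  rw [sub_eq_neg_add, exp_add, neg_mul]
  exact mul_le_mul_of_nonneg_left (mgf_cnt_le P hA ht) (exp_pos _).le

lemma measure_cnt_gt_chernoffBound_le {A : Set Z} (hA : MeasurableSet A) {L : ℝ} (hL : 0 ≤ L) :
    (Measure.pi fun _ : Fin n => P) {S | chernoffBound (n * (P A).toReal) L < cnt S A}
      ≤ ENNReal.ofReal (exp (-L)) := by
  obtain ⟨t, ht, hexp⟩ :=
    exists_exponent_chernoffBound (mul_nonneg n.cast_nonneg ENNReal.toReal_nonneg) hL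
  calc (Measure.pi fun _ : Fin n => P) {S | chernoffBound (n * (P A).toReal) L < cnt S A}
      ≤ (Measure.pi fun _ : Fin n => P) {S | chernoffBound (n * (P A).toReal) L ≤ cnt S A} :=
        measure_mono fun _ hS => le_of_lt hS.out
    _ ≤ _ := measure_cnt_ge_le P hA ht _
    _ ≤ _ := ENNReal.ofReal_le_ofReal (exp_le_exp.mpr hexp)

end Chernoff

lemma sum_mul_le_sum_mul_add_mul_sum_posPart {ι : Type*} {s : Finset ι} {p q c : ι → ℝ} {C : ℝ}
    (hpq : ∑ i ∈ s, p i = ∑ i ∈ s, q i) (hc : ∀ i ∈ s, 0 ≤ c i) (hcC : ∀ i ∈ s, c i ≤ C) :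
    ∑ i ∈ s, p i * c i ≤ ∑ i ∈ s, q i * c i + C * ∑ i ∈ s, (q i - p i)⁺ := by
  have hmass : ∑ i ∈ s, (p i - q i)⁺ = ∑ i ∈ s, (q i - p i)⁺ := by
    have : ∑ i ∈ s, ((p i - q i)⁺ - (q i - p i)⁺) = 0 := by
      simp_rw [← neg_sub (p _), posPart_neg, posPart_sub_negPart]
      rw [Finset.sum_sub_distrib, hpq, sub_self]
    rwa [Finset.sum_sub_distrib, sub_eq_zero] at this
  have hterm : ∀ i ∈ s, (p i - q i) * c i ≤ (p i - q i)⁺ * C := fun i hi =>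
    calc (p i - q i) * c i ≤ (p i - q i)⁺ * c i :=
          mul_le_mul_of_nonneg_right (le_posPart _) (hc i hi)
      _ ≤ (p i - q i)⁺ * C := mul_le_mul_of_nonneg_left (hcC i hi) (posPart_nonneg _)
  have := Finset.sum_le_sum hterm
  rw [← Finset.sum_mul, hmass] at this
  simp only [sub_mul, Finset.sum_sub_distrib] at this
  linarith

lemma sum_sqrt_mul_sqrt_le_sqrt_card_mul {ι : Type*} (s : Finset ι) {p : ι → ℝ}
    (hp : ∀ i, 0 ≤ p i) (hp1 : ∑ i ∈ s, p i ≤ 1) {a : ℝ} (ha : 0 ≤ a) :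
    ∑ i ∈ s, √(p i) * √a ≤ √(s.card * a) := by
  calc ∑ i ∈ s, √(p i) * √a ≤ √(∑ i ∈ s, p i) * √(∑ _i ∈ s, a) :=
        Real.sum_sqrt_mul_sqrt_le s hp fun _ => ha
    _ ≤ 1 * √(s.card * a) := by
        rw [Finset.sum_const, nsmul_eq_mul]
        gcongr
        exact sqrt_le_one.mpr hp1
    _ = √(s.card * a) := one_mul _

lemma posPart_div_sub_le_of_le_chernoffBound {n : ℕ} (hn : 0 < n) {p L x : ℝ} (hp : 0 ≤ p)
    (hL : 0 ≤ L) (hx : x ≤ chernoffBound (n * p) L) :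
    (x / n - p)⁺ ≤ 2 * (√p * √(L / n)) + 2 * L / n := by
  have hnR : (0 : ℝ) < n := by exact_mod_cast hn
  have hsqrt : √(n * p * L) / n = √p * √(L / n) := by
    rw [← sqrt_mul hp, show p * (L / n) = n * p * L / n ^ 2 by field_simp,
      sqrt_div' _ (sq_nonneg _), sqrt_sq hnR.le]
  refine sup_le ?_ (by positivity)
  rw [← hsqrt, sub_le_iff_le_add, div_le_iff₀ hnR]
  unfold chernoffBound at hx
  field_simp
  linarith

section CondAvg

variable {Z : Type*} [MeasurableSpace Z] {P : Measure Z} {f : Z → ℝ} {A : Set Z}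

lemma condAvg_nonneg (hf : ∀ z, 0 ≤ f z) : 0 ≤ condAvg P f A :=
  div_nonneg (setIntegral_nonneg_of_ae_restrict (ae_of_all _ hf)) ENNReal.toReal_nonneg

open scoped Classical in
lemma cnt_mul_epsBar {n : ℕ} (S : Fin n → Z) :
    (cnt S A : ℝ) * epsBar P f S A
      = ∑ j ∈ Finset.univ.filter (fun j => S j ∈ A), condAvg P (fun z => |f z - f (S j)|) A := by
  rw [epsBar, cnt]
  rcases eq_or_ne (Finset.univ.filter fun j => S j ∈ A) ∅ with h | h
  · simp [h]
  · exact mul_div_cancel₀ _ (by simpa using h)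

variable [IsFiniteMeasure P]

lemma measure_toReal_mul_condAvg :
    (P A).toReal * condAvg P f A = ∫ z in A, f z ∂P := by
  by_cases h : (P A).toReal = 0
  · have hA : P A = 0 := (ENNReal.toReal_eq_zero_iff _).mp h |>.resolve_right (measure_ne_top _ _)
    simp [h, Measure.restrict_eq_zero.mpr hA]
  · rw [condAvg, mul_div_cancel₀ _ h]

lemma condAvg_le_of_le (hA : P A ≠ 0) (hf : Integrable f P) {C : ℝ} (hfC : ∀ z, f z ≤ C) :
    condAvg P f A ≤ C := by
  have hpos : 0 < (P A).toReal := ENNReal.toReal_pos hA (measure_ne_top _ _)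
  refine le_of_mul_le_mul_left ?_ hpos
  rw [measure_toReal_mul_condAvg]
  calc ∫ z in A, f z ∂P ≤ ∫ _ in A, C ∂P :=
        setIntegral_mono hf.integrableOn (integrable_const C).integrableOn hfC
    _ = (P A).toReal * C := by rw [setIntegral_const, smul_eq_mul, measureReal_def]

lemma condAvg_le_add_condAvg_abs_sub (hA : P A ≠ 0) (hf : Integrable f P) (c : ℝ) :
    condAvg P f A ≤ c + condAvg P (fun z => |f z - c|) A := by
  have hpos : 0 < (P A).toReal := ENNReal.toReal_pos hA (measure_ne_top _ _)
  have habs : Integrable (fun z => |f z - c|) P := (hf.sub (integrable_const c)).abs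
  refine le_of_mul_le_mul_left ?_ hpos
  rw [mul_add, measure_toReal_mul_condAvg, measure_toReal_mul_condAvg]
  calc ∫ z in A, f z ∂P ≤ ∫ z in A, (c + |f z - c|) ∂P :=
        setIntegral_mono hf.integrableOn ((integrable_const c).add habs).integrableOn
          fun z => by linarith [le_abs_self (f z - c)]
    _ = (P A).toReal * c + ∫ z in A, |f z - c| ∂P := by
        rw [integral_add (integrable_const c).integrableOn habs.integrableOn, setIntegral_const,
          smul_eq_mul, measureReal_def]

open scoped Classical in
lemma cnt_mul_condAvg_le {n : ℕ} (hA : P A ≠ 0) (hf : Integrable f P) (S : Fin n → Z) :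
    (cnt S A : ℝ) * condAvg P f A
      ≤ ∑ j ∈ Finset.univ.filter (fun j => S j ∈ A), f (S j) + cnt S A * epsBar P f S A := by
  rw [cnt_mul_epsBar, ← Finset.sum_add_distrib, cnt, ← nsmul_eq_mul, ← Finset.sum_const]
  exact Finset.sum_le_sum fun j _ => condAvg_le_add_condAvg_abs_sub hA hf (f (S j))

end CondAvg

section Partition

variable {Z : Type*} {K n : ℕ} {Zpart : Fin K → Set Z}

open scoped Classical in
lemma sum_sum_filter_mem_of_partition
    (hZdisj : ∀ i j, i ≠ j → Disjoint (Zpart i) (Zpart j))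
    (hZcover : (⋃ i, Zpart i) = Set.univ)
    (S : Fin n → Z) (g : Fin n → ℝ) :
    ∑ i, ∑ j ∈ Finset.univ.filter (fun j => S j ∈ Zpart i), g j = ∑ j, g j := by
  simp_rw [Finset.sum_filter]
  rw [Finset.sum_comm]
  refine Finset.sum_congr rfl fun j _ => ?_
  obtain ⟨i, hi⟩ := Set.mem_iUnion.mp (hZcover ▸ Set.mem_univ (S j))
  rw [Finset.sum_eq_single i (fun k _ hk => if_neg fun hk' =>
    Set.disjoint_left.mp (hZdisj i k hk.symm) hi hk') (by simp), if_pos hi]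

lemma sum_cnt_of_partition
    (hZdisj : ∀ i j, i ≠ j → Disjoint (Zpart i) (Zpart j))
    (hZcover : (⋃ i, Zpart i) = Set.univ)
    (S : Fin n → Z) :
    ∑ i, (cnt S (Zpart i) : ℝ) = n := by
  simpa [cnt] using sum_sum_filter_mem_of_partition hZdisj hZcover S 1

lemma sum_Tset_eq_sum (S : Fin n → Z) (Zpart : Fin K → Set Z) {g : Fin K → ℝ}
    (hg : ∀ i, cnt S (Zpart i) = 0 → g i = 0) :
    ∑ i ∈ Tset S Zpart, g i = ∑ i, g i :=
  Finset.sum_filter_of_ne fun i _ hi => Nat.pos_of_ne_zero fun h => hi (hg i h)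

variable [MeasurableSpace Z]

lemma sum_measure_toReal_of_partition (P : Measure Z) [IsProbabilityMeasure P]
    (hZmeas : ∀ i, MeasurableSet (Zpart i))
    (hZdisj : ∀ i j, i ≠ j → Disjoint (Zpart i) (Zpart j))
    (hZcover : (⋃ i, Zpart i) = Set.univ) :
    ∑ i, (P (Zpart i)).toReal = 1 := by
  rw [← ENNReal.toReal_sum fun i _ => measure_ne_top P _, ← tsum_fintype (L := .unconditional _),
    ← measure_iUnion (fun i j h => hZdisj i j h) hZmeas, hZcover, measure_univ, ENNReal.toReal_one]

lemma integral_eq_sum_mul_condAvg (P : Measure Z) [IsFiniteMeasure P]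
    (hZmeas : ∀ i, MeasurableSet (Zpart i))
    (hZdisj : ∀ i j, i ≠ j → Disjoint (Zpart i) (Zpart j))
    (hZcover : (⋃ i, Zpart i) = Set.univ)
    {f : Z → ℝ} (hf : Integrable f P) :
    ∫ z, f z ∂P = ∑ i, (P (Zpart i)).toReal * condAvg P f (Zpart i) := by
  simp_rw [measure_toReal_mul_condAvg]
  rw [← tsum_fintype (L := .unconditional _),
    ← integral_iUnion hZmeas (fun i j h => hZdisj i j h) hf.integrableOn, hZcover, setIntegral_univ]

lemma sum_cnt_div_mul_condAvg_le (P : Measure Z) [IsFiniteMeasure P]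
    (hZdisj : ∀ i j, i ≠ j → Disjoint (Zpart i) (Zpart j))
    (hZcover : (⋃ i, Zpart i) = Set.univ)
    (hZpos : ∀ i, 0 < P (Zpart i)) {f : Z → ℝ} (hf : Integrable f P) (S : Fin n → Z) :
    ∑ i, (cnt S (Zpart i) : ℝ) / n * condAvg P f (Zpart i)
      ≤ empLoss f S + ∑ i ∈ Tset S Zpart, (cnt S (Zpart i) : ℝ) / n * epsBar P f S (Zpart i) := by
  rw [sum_Tset_eq_sum S Zpart fun i h => by simp [h], empLoss]
  simp_rw [div_mul_eq_mul_div, ← Finset.sum_div, ← add_div]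
  gcongr
  rw [← sum_sum_filter_mem_of_partition hZdisj hZcover S fun j => f (S j),
    ← Finset.sum_add_distrib]
  exact Finset.sum_le_sum fun i _ => cnt_mul_condAvg_le (hZpos i).ne' hf S

lemma sum_posPart_cnt_div_sub_le (P : Measure Z) [IsProbabilityMeasure P]
    (hZmeas : ∀ i, MeasurableSet (Zpart i))
    (hZdisj : ∀ i j, i ≠ j → Disjoint (Zpart i) (Zpart j))
    (hZcover : (⋃ i, Zpart i) = Set.univ)
    (hn : 0 < n) {L : ℝ} (hL : 0 ≤ L) (S : Fin n → Z)
    (hS : ∀ i, (cnt S (Zpart i) : ℝ) ≤ chernoffBound (n * (P (Zpart i)).toReal) L) :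
    ∑ i, ((cnt S (Zpart i) : ℝ) / n - (P (Zpart i)).toReal)⁺
      ≤ 2 * √((Tset S Zpart).card * L / n) + 2 * (Tset S Zpart).card * L / n := by
  set T := Tset S Zpart
  have hT : ∑ i ∈ T, (P (Zpart i)).toReal ≤ 1 :=
    (Finset.sum_le_sum_of_subset_of_nonneg (Finset.subset_univ T) fun _ _ _ =>
      ENNReal.toReal_nonneg).trans_eq (sum_measure_toReal_of_partition P hZmeas hZdisj hZcover)
  rw [← sum_Tset_eq_sum S Zpart fun i h => by simp [h]]
  calc ∑ i ∈ T, ((cnt S (Zpart i) : ℝ) / n - (P (Zpart i)).toReal)⁺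
      ≤ ∑ i ∈ T, (2 * (√(P (Zpart i)).toReal * √(L / n)) + 2 * L / n) :=
        Finset.sum_le_sum fun i _ =>
          posPart_div_sub_le_of_le_chernoffBound hn ENNReal.toReal_nonneg hL (hS i)
    _ = 2 * ∑ i ∈ T, √(P (Zpart i)).toReal * √(L / n) + T.card * (2 * L / n) := by
        rw [Finset.sum_add_distrib, ← Finset.mul_sum, Finset.sum_const, nsmul_eq_mul]
    _ ≤ 2 * √(T.card * (L / n)) + T.card * (2 * L / n) := by
        gcongr
        exact sum_sqrt_mul_sqrt_le_sqrt_card_mul T (fun _ => ENNReal.toReal_nonneg) hT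
          (div_nonneg hL n.cast_nonneg)
    _ = 2 * √(T.card * L / n) + 2 * T.card * L / n := by
        rw [← mul_div_assoc]; ring

end Partition

lemma integral_le_of_forall_cnt_le_chernoffBound {Z : Type*} [MeasurableSpace Z]
    (P : Measure Z) [IsProbabilityMeasure P] {K : ℕ} (Zpart : Fin K → Set Z)
    (hZmeas : ∀ i, MeasurableSet (Zpart i))
    (hZdisj : ∀ i j, i ≠ j → Disjoint (Zpart i) (Zpart j))
    (hZcover : (⋃ i, Zpart i) = Set.univ)
    (hZpos : ∀ i, 0 < P (Zpart i)) {n : ℕ} (hn : 0 < n) {f : Z → ℝ} (hfm : Measurable f)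
    (hf0 : ∀ z, 0 ≤ f z) (hfb : BddAbove (Set.range f)) {L : ℝ} (hL : 0 ≤ L) (S : Fin n → Z)
    (hS : ∀ i, (cnt S (Zpart i) : ℝ) ≤ chernoffBound (n * (P (Zpart i)).toReal) L) :
    ∫ z, f z ∂P ≤
      (⨆ z, f z) * (√2 + 1) * √((Tset S Zpart).card * L / n)
        + 2 * (⨆ z, f z) * (Tset S Zpart).card * L / n
        + empLoss f S
        + ∑ i ∈ Tset S Zpart, (cnt S (Zpart i) : ℝ) / n * epsBar P f S (Zpart i) := by
  set C := ⨆ z, f z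
  have hfC : ∀ z, f z ≤ C := le_ciSup hfb
  have hC : 0 ≤ C := Real.iSup_nonneg hf0
  have hf : Integrable f P :=
    .of_bound hfm.aestronglyMeasurable C (ae_of_all _ fun z => by
      rw [norm_of_nonneg (hf0 z)]; exact hfC z)
  have hpq : ∑ i, (P (Zpart i)).toReal = ∑ i, (cnt S (Zpart i) : ℝ) / n := by
    rw [sum_measure_toReal_of_partition P hZmeas hZdisj hZcover, ← Finset.sum_div,
      sum_cnt_of_partition hZdisj hZcover S, div_self (by positivity)]
  have hsqrt : 2 ≤ √2 + 1 := by linarith [one_le_sqrt.mpr (by norm_num : (1 : ℝ) ≤ 2)]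
  have hdev := sum_posPart_cnt_div_sub_le P hZmeas hZdisj hZcover hn hL S hS
  have hemp := sum_cnt_div_mul_condAvg_le P hZdisj hZcover hZpos hf S
  calc ∫ z, f z ∂P = ∑ i, (P (Zpart i)).toReal * condAvg P f (Zpart i) :=
        integral_eq_sum_mul_condAvg P hZmeas hZdisj hZcover hf
    _ ≤ ∑ i, (cnt S (Zpart i) : ℝ) / n * condAvg P f (Zpart i)
          + C * ∑ i, ((cnt S (Zpart i) : ℝ) / n - (P (Zpart i)).toReal)⁺ :=
        sum_mul_le_sum_mul_add_mul_sum_posPart hpq (fun i _ => condAvg_nonneg hf0)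
          fun i _ => condAvg_le_of_le (hZpos i).ne' hf hfC
    _ ≤ _ := by
        have hslack := mul_le_mul_of_nonneg_right hsqrt
          (mul_nonneg hC (sqrt_nonneg ((Tset S Zpart).card * L / n)))
        linear_combination hemp + mul_le_mul_of_nonneg_left hdev hC + hslack

lemma measure_iUnion_cnt_gt_chernoffBound_le {Z : Type*} [MeasurableSpace Z] (P : Measure Z)
    [IsProbabilityMeasure P] {K : ℕ} (Zpart : Fin K → Set Z)
    (hZmeas : ∀ i, MeasurableSet (Zpart i)) {n : ℕ} {L : ℝ} (hL : 0 ≤ L) :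
    (Measure.pi fun _ : Fin n => P)
        (⋃ i, {S | chernoffBound (n * (P (Zpart i)).toReal) L < cnt S (Zpart i)})
      ≤ ENNReal.ofReal (K * exp (-L)) := by
  calc _ ≤ ∑ i, (Measure.pi fun _ : Fin n => P)
          {S | chernoffBound (n * (P (Zpart i)).toReal) L < cnt S (Zpart i)} :=
        measure_iUnion_fintype_le _ _
    _ ≤ ∑ _i : Fin K, ENNReal.ofReal (exp (-L)) :=
        Finset.sum_le_sum fun i _ => measure_cnt_gt_chernoffBound_le P (hZmeas i) hL
    _ = ENNReal.ofReal (K * exp (-L)) := by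
        rw [Finset.sum_const, Finset.card_univ, Fintype.card_fin, nsmul_eq_mul,
          ENNReal.ofReal_mul K.cast_nonneg, ENNReal.ofReal_natCast]

/-- Local Sensitivity generalization bound. -/
theorem statement6 {Z : Type*} [MeasurableSpace Z] (P : Measure Z) [IsProbabilityMeasure P]
    {K : ℕ} (Zpart : Fin K → Set Z)
    (hZmeas : ∀ i, MeasurableSet (Zpart i))
    (hZdisj : ∀ i j, i ≠ j → Disjoint (Zpart i) (Zpart j))
    (hZcover : (⋃ i, Zpart i) = Set.univ)
    (hZpos : ∀ i, 0 < P (Zpart i))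
    {n : ℕ} (hn : 0 < n)
    (ℓ : (Fin n → Z) → Z → ℝ)
    (hℓmeas : ∀ S, Measurable (ℓ S))
    (hℓnonneg : ∀ S z, 0 ≤ ℓ S z)
    (hℓbdd : ∀ S, BddAbove (Set.range (ℓ S)))
    (δ : ℝ) (hδ : 0 < δ) :
    ENNReal.ofReal (1 - δ) ≤
      (Measure.pi fun _ : Fin n => P)
        {S | ∫ z, ℓ S z ∂P ≤
          (⨆ z, ℓ S z) * (Real.sqrt 2 + 1) *
              Real.sqrt (((Tset S Zpart).card : ℝ) * Real.log (2 * K / δ) / n)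
            + 2 * (⨆ z, ℓ S z) * ((Tset S Zpart).card : ℝ) * Real.log (2 * K / δ) / n
            + empLoss (ℓ S) S
            + ∑ i ∈ Tset S Zpart, ((cnt S (Zpart i) : ℝ) / n) * epsBar P (ℓ S) S (Zpart i)} := by
  rcases le_or_gt 1 δ with hδ1 | hδ1
  · simp [ENNReal.ofReal_eq_zero.mpr (sub_nonpos.mpr hδ1)]
  have hK : (1 : ℝ) ≤ K := by
    obtain ⟨z⟩ := nonempty_of_isProbabilityMeasure P
    obtain ⟨i, -⟩ := Set.mem_iUnion.mp (hZcover ▸ Set.mem_univ z)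
    exact_mod_cast i.pos
  set L := log (2 * K / δ)
  have hL : 0 ≤ L := log_nonneg ((le_div_iff₀ hδ).mpr (by linarith))
  have hKL : K * exp (-L) = δ / 2 := by
    rw [exp_neg, exp_log (by positivity)]
    field_simp
  set Bad := ⋃ i, {S : Fin n → Z | chernoffBound (n * (P (Zpart i)).toReal) L < cnt S (Zpart i)}
  have hBad : MeasurableSet Bad :=
    .iUnion fun i => measurableSet_lt measurable_const (measurable_cnt (hZmeas i))
  calc ENNReal.ofReal (1 - δ) ≤ 1 - ENNReal.ofReal (K * exp (-L)) := by
        rw [hKL, ← ENNReal.ofReal_one, ← ENNReal.ofReal_sub _ (by positivity)]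
        exact ENNReal.ofReal_le_ofReal (by linarith)
    _ ≤ 1 - (Measure.pi fun _ : Fin n => P) Bad :=
        tsub_le_tsub_left (measure_iUnion_cnt_gt_chernoffBound_le P Zpart hZmeas hL) 1
    _ = (Measure.pi fun _ : Fin n => P) Badᶜ := (prob_compl_eq_one_sub hBad).symm
    _ ≤ _ := measure_mono fun S hS =>
        integral_le_of_forall_cnt_le_chernoffBound P Zpart hZmeas hZdisj hZcover hZpos hn
          (hℓmeas S) (hℓnonneg S) (hℓbdd S) hL S fun i => not_lt.mp fun h =>
            hS (Set.mem_iUnion_of_mem i h)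
end

section
/- (Lower bound for a fixed model.) Let h be a fixed model with bounded nonnegative measurable loss \ell_h. Set \hat{a} = \max_{j \in [K]} a_j(h) and \beta = 2 \sum_{j=1}^{K} P(Z_j) a_j(h)^2. If \beta > 0, then for every \delta \ge \exp(-n\beta/(2\hat{a}^2)), with probability at least 1 - \delta over n i.i.d. samples S from P: F(P,h) \ge \left( \sqrt{ \sum_{i \in T_S} (n_i/n) a_i(h) + \hat{a} \ln(1/\delta)/n } - \sqrt{ \hat{a} \ln(1/\delta)/n } \right)^2. -/
open MeasureTheory Finset

/-
Replace the loss by the step function `g` equal to `a_i(h)` on `Z_i`: its mean is `F = F(P,h)`,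
its empirical mean is `∑_{i ∈ T_S} (n_i/n) a_i(h)`, and `0 ≤ g ≤ â`. For such a variable,
`e^x ≤ 1 + x + x²` on `[0, 1]` and `g² ≤ â g` give the Bernstein-type bound
`E e^{tg} ≤ exp ((t + t² â) F)` for `t â ≤ 1`, and Chernoff's method with `t = √(c/F)/â`,
`c = â ln(1/δ)/n`, yields `P(empirical mean ≥ F + 2√(F c)) ≤ δ`. Off that event,
`√(mean + c) ≤ √F + √c`, which is the claim. The condition `δ ≥ exp(-nβ/(2â²))` together with
`β ≤ 2 â F` is exactly what makes `t â ≤ 1`.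
-/

lemma sq_sqrt_add_sub_sqrt_le {A c m : ℝ} (hA : 0 ≤ A) (hc : 0 ≤ c) (hm : 0 ≤ m)
    (hAm : A ≤ m + 2 * Real.sqrt (m * c)) : (Real.sqrt (A + c) - Real.sqrt c) ^ 2 ≤ m := by
  have hsq : m + 2 * Real.sqrt (m * c) + c = (Real.sqrt m + Real.sqrt c) ^ 2 := by
    rw [add_sq, Real.sq_sqrt hm, Real.sq_sqrt hc, Real.sqrt_mul hm]
    ring
  have hupper : Real.sqrt (A + c) ≤ Real.sqrt m + Real.sqrt c :=
    (Real.sqrt_le_left (by positivity)).2 (by linarith)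
  have hlower : Real.sqrt c ≤ Real.sqrt (A + c) := Real.sqrt_le_sqrt (by linarith)
  calc (Real.sqrt (A + c) - Real.sqrt c) ^ 2 ≤ Real.sqrt m ^ 2 :=
        pow_le_pow_left₀ (by linarith) (by linarith) 2
    _ = m := Real.sq_sqrt hm

lemma sum_mul_sq_le_mul_sum {ι : Type*} (s : Finset ι) {w a : ι → ℝ} {M : ℝ}
    (hw : ∀ i ∈ s, 0 ≤ w i) (ha : ∀ i ∈ s, a i ∈ Set.Icc 0 M) :
    ∑ i ∈ s, w i * a i ^ 2 ≤ M * ∑ i ∈ s, w i * a i := by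
  rw [Finset.mul_sum]
  refine Finset.sum_le_sum fun i hi => ?_
  have := mul_le_mul_of_nonneg_left
    (mul_le_mul_of_nonneg_right (ha i hi).2 (ha i hi).1) (hw i hi)
  linarith

lemma mul_log_one_div_div_le {n β M m δ : ℝ} (hn : 0 < n) (hM : 0 < M) (hδ0 : 0 < δ)
    (hδ : Real.exp (-(n * β) / (2 * M ^ 2)) ≤ δ) (hβ : β ≤ 2 * M * m) :
    M * Real.log (1 / δ) / n ≤ m := by
  have hLβ : Real.log (1 / δ) ≤ n * β / (2 * M ^ 2) := by
    rw [one_div, Real.log_inv, neg_le, ← neg_div]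
    exact (Real.le_log_iff_exp_le hδ0).2 hδ
  rw [div_le_iff₀ hn]
  calc M * Real.log (1 / δ) ≤ M * (n * (2 * M * m) / (2 * M ^ 2)) := by
        gcongr
        exact hLβ.trans (by gcongr)
    _ = m * n := by field_simp

lemma integrable_of_nonneg_of_le {Ω : Type*} [MeasurableSpace Ω] {μ : Measure Ω}
    [IsFiniteMeasure μ] {f : Ω → ℝ} {b : ℝ} (hf : Measurable f) (hf0 : ∀ x, 0 ≤ f x)
    (hfb : ∀ x, f x ≤ b) : Integrable f μ :=
  .of_bound hf.aestronglyMeasurable b <| .of_forall fun x => by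
    rw [Real.norm_eq_abs, abs_of_nonneg (hf0 x)]
    exact hfb x

section BoundedNonneg

variable {Ω : Type*} [MeasurableSpace Ω] {μ : Measure Ω} [IsProbabilityMeasure μ]
  {f : Ω → ℝ} {b : ℝ}

lemma integral_exp_mul_le (hf : Measurable f) (hf0 : ∀ x, 0 ≤ f x) (hfb : ∀ x, f x ≤ b)
    {t : ℝ} (ht : 0 ≤ t) (htb : t * b ≤ 1) :
    ∫ x, Real.exp (t * f x) ∂μ ≤ Real.exp ((t + t ^ 2 * b) * ∫ x, f x ∂μ) := by
  have hfint : Integrable f μ := integrable_of_nonneg_of_le hf hf0 hfb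
  have hexp_int : Integrable (fun x => Real.exp (t * f x)) μ :=
    integrable_of_nonneg_of_le (hf.const_mul t).exp (fun _ => (Real.exp_pos _).le)
      fun x => Real.exp_le_exp.2 (mul_le_mul_of_nonneg_left (hfb x) ht)
  have hpoint : ∀ x, Real.exp (t * f x) ≤ 1 + (t + t ^ 2 * b) * f x := fun x => by
    have htf : t * f x ≤ 1 := (mul_le_mul_of_nonneg_left (hfb x) ht).trans htb
    have hquad := le_of_abs_le (Real.abs_exp_sub_one_sub_id_le (x := t * f x)
      (abs_le.2 ⟨by nlinarith [hf0 x], htf⟩))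
    nlinarith [hf0 x, hfb x, mul_nonneg (sq_nonneg t) (hf0 x)]
  calc ∫ x, Real.exp (t * f x) ∂μ ≤ ∫ x, (1 + (t + t ^ 2 * b) * f x) ∂μ :=
        integral_mono hexp_int ((integrable_const 1).add (hfint.const_mul _)) hpoint
    _ = 1 + (t + t ^ 2 * b) * ∫ x, f x ∂μ := by
        rw [integral_add (integrable_const 1) (hfint.const_mul _), integral_const_mul]
        simp
    _ ≤ _ := by linarith [Real.add_one_le_exp ((t + t ^ 2 * b) * ∫ x, f x ∂μ)]

lemma measureReal_sum_ge_le {n : ℕ} (hf : Measurable f) (hf0 : ∀ x, 0 ≤ f x)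
    (hfb : ∀ x, f x ≤ b) {t : ℝ} (ht : 0 ≤ t) (htb : t * b ≤ 1) (ε : ℝ) :
    (Measure.pi fun _ : Fin n => μ).real {S | ε ≤ ∑ j, f (S j)} ≤
      Real.exp (-t * ε + n * ((t + t ^ 2 * b) * ∫ x, f x ∂μ)) := by
  have hX : Measurable fun S : Fin n → Ω => ∑ j, f (S j) :=
    Finset.measurable_sum _ fun j _ => hf.comp (measurable_pi_apply j)
  have hexp_int : Integrable (fun S : Fin n → Ω => Real.exp (t * ∑ j, f (S j)))
      (Measure.pi fun _ : Fin n => μ) :=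
    integrable_of_nonneg_of_le (hX.const_mul t).exp (fun _ => (Real.exp_pos _).le)
      fun S => Real.exp_le_exp.2 (mul_le_mul_of_nonneg_left
        (Finset.sum_le_sum fun j _ => hfb (S j)) ht)
  have hmgf : ProbabilityTheory.mgf (fun S : Fin n → Ω => ∑ j, f (S j))
      (Measure.pi fun _ : Fin n => μ) t = (∫ x, Real.exp (t * f x) ∂μ) ^ n := by
    simp only [ProbabilityTheory.mgf, Finset.mul_sum, Real.exp_sum]
    simpa using integral_fintype_prod_eq_pow (ι := Fin n) (μ := μ) fun x => Real.exp (t * f x)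
  calc _ ≤ Real.exp (-t * ε) * (∫ x, Real.exp (t * f x) ∂μ) ^ n :=
        hmgf ▸ ProbabilityTheory.measure_ge_le_exp_mul_mgf ε ht hexp_int
    _ ≤ Real.exp (-t * ε) * Real.exp ((t + t ^ 2 * b) * ∫ x, f x ∂μ) ^ n := by
        refine mul_le_mul_of_nonneg_left (pow_le_pow_left₀ ?_ ?_ n) (Real.exp_pos _).le
        · exact integral_nonneg fun _ => (Real.exp_pos _).le
        · exact integral_exp_mul_le hf hf0 hfb ht htb
    _ = _ := by rw [← Real.exp_nat_mul, ← Real.exp_add]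

theorem ofReal_one_sub_exp_le_measure_sq_sqrt_add_sub_sqrt_le {n : ℕ} (hn : 0 < n)
    (hf : Measurable f) (hf0 : ∀ x, 0 ≤ f x) (hfb : ∀ x, f x ≤ b) {c : ℝ} (hc : 0 < c)
    (hcm : c ≤ ∫ x, f x ∂μ) :
    ENNReal.ofReal (1 - Real.exp (-(n * c / b))) ≤ (Measure.pi fun _ : Fin n => μ)
      {S | (Real.sqrt ((∑ j, f (S j)) / n + c) - Real.sqrt c) ^ 2 ≤ ∫ x, f x ∂μ} := by
  set m := ∫ x, f x ∂μ
  have hm : 0 < m := hc.trans_le hcm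
  have hb : 0 < b := hm.trans_le <| by
    simpa using
      integral_mono (μ := μ) (integrable_of_nonneg_of_le hf hf0 hfb) (integrable_const b) hfb
  have hnR : (0 : ℝ) < n := Nat.cast_pos.2 hn
  set t := Real.sqrt (c / m) / b
  have htb : t * b = Real.sqrt (c / m) := div_mul_cancel₀ _ hb.ne'
  have ht0 : 0 ≤ t := by positivity
  clear_value t
  have hsqrt : Real.sqrt (m * c) * Real.sqrt (c / m) = c := by
    rw [← Real.sqrt_mul (by positivity), show m * c * (c / m) = c ^ 2 by field_simp,
      Real.sqrt_sq hc.le]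
  have hbad := measureReal_sum_ge_le (μ := μ) (n := n) hf hf0 hfb ht0
    (htb ▸ Real.sqrt_le_one.2 ((div_le_one hm).2 hcm)) (n * (m + 2 * Real.sqrt (m * c)))
  have hexponent : -t * (n * (m + 2 * Real.sqrt (m * c))) + n * ((t + t ^ 2 * b) * m)
      = -(n * c / b) := by
    have hcm' : Real.sqrt (c / m) ^ 2 * m = c := by
      rw [Real.sq_sqrt (by positivity)]
      field_simp
    rw [← neg_div]
    refine eq_div_of_mul_eq hb.ne' ?_
    linear_combination (n : ℝ) * hcm' - 2 * n * hsqrt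
      + (n * m * (t * b + Real.sqrt (c / m)) - 2 * n * Real.sqrt (m * c)) * htb
  rw [hexponent] at hbad
  set Bad := {S : Fin n → Ω | n * (m + 2 * Real.sqrt (m * c)) ≤ ∑ j, f (S j)}
  have hgood : Badᶜ ⊆ {S | (Real.sqrt ((∑ j, f (S j)) / n + c) - Real.sqrt c) ^ 2 ≤ m} :=
    fun S hS => sq_sqrt_add_sub_sqrt_le
      (div_nonneg (Finset.sum_nonneg fun j _ => hf0 (S j)) hnR.le) hc.le hm.le
      ((div_le_iff₀' hnR).2 (le_of_lt (not_le.1 hS)))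
  calc ENNReal.ofReal (1 - Real.exp (-(n * c / b)))
      = 1 - ENNReal.ofReal (Real.exp (-(n * c / b))) := by
        rw [ENNReal.ofReal_sub _ (Real.exp_pos _).le, ENNReal.ofReal_one]
    _ ≤ 1 - (Measure.pi fun _ : Fin n => μ) Bad := by
        gcongr
        rw [← ofReal_measureReal]
        exact ENNReal.ofReal_le_ofReal hbad
    _ ≤ (Measure.pi fun _ : Fin n => μ) Badᶜ := by
        rw [tsub_le_iff_left, ← measure_univ (μ := Measure.pi fun _ : Fin n => μ)]
        exact measure_univ_le_add_compl Bad
    _ ≤ _ := measure_mono hgood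

end BoundedNonneg

open Function

section Partition

variable {Z : Type*} {K : ℕ}

noncomputable def stepFun (Zpart : Fin K → Set Z) (a : Fin K → ℝ) (z : Z) : ℝ :=
  ∑ i, (Zpart i).indicator (fun _ => a i) z

lemma stepFun_eq_of_mem {Zpart : Fin K → Set Z} (hdisj : Pairwise (Disjoint on Zpart))
    (a : Fin K → ℝ) {z : Z} {i : Fin K} (hz : z ∈ Zpart i) : stepFun Zpart a z = a i := by
  rw [stepFun, Finset.sum_eq_single i (fun j _ hji => Set.indicator_of_notMem
    (Set.disjoint_left.1 (hdisj hji.symm) hz) _) (by simp), Set.indicator_of_mem hz]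

lemma stepFun_mem {Zpart : Fin K → Set Z} (hdisj : Pairwise (Disjoint on Zpart))
    (hcover : ⋃ i, Zpart i = Set.univ) {a : Fin K → ℝ} {s : Set ℝ} (ha : ∀ i, a i ∈ s) (z : Z) :
    stepFun Zpart a z ∈ s := by
  obtain ⟨i, hi⟩ := Set.mem_iUnion.1 (hcover ▸ Set.mem_univ z)
  exact stepFun_eq_of_mem hdisj a hi ▸ ha i

open scoped Classical in
lemma sum_stepFun_apply {n : ℕ} (Zpart : Fin K → Set Z) (a : Fin K → ℝ) (S : Fin n → Z) :
    ∑ j, stepFun Zpart a (S j) = ∑ i, (cnt S (Zpart i) : ℝ) * a i := by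
  simp only [stepFun, cnt, Set.indicator_apply]
  rw [Finset.sum_comm]
  simp [Finset.sum_ite]

lemma sum_Tset_cnt_div_mul {n : ℕ} (Zpart : Fin K → Set Z) (a : Fin K → ℝ) (S : Fin n → Z) :
    ∑ i ∈ Tset S Zpart, (cnt S (Zpart i) : ℝ) / n * a i = (∑ j, stepFun Zpart a (S j)) / n := by
  rw [Tset, Finset.sum_filter_of_ne fun i _ hi => Nat.pos_of_ne_zero fun h => hi (by simp [h]),
    sum_stepFun_apply, Finset.sum_div]
  simp only [div_mul_eq_mul_div]

variable [MeasurableSpace Z]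

lemma measurable_stepFun {Zpart : Fin K → Set Z} (hmeas : ∀ i, MeasurableSet (Zpart i))
    (a : Fin K → ℝ) : Measurable (stepFun Zpart a) :=
  Finset.measurable_sum _ fun i _ => measurable_const.indicator (hmeas i)

lemma integral_stepFun (P : Measure Z) [IsFiniteMeasure P] {Zpart : Fin K → Set Z}
    (hmeas : ∀ i, MeasurableSet (Zpart i)) (a : Fin K → ℝ) :
    ∫ z, stepFun Zpart a z ∂P = ∑ i, P.real (Zpart i) * a i := by
  simp only [stepFun]
  rw [integral_finsetSum _ fun i _ => (integrable_const (a i)).indicator (hmeas i)]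
  simp [integral_indicator_const _ (hmeas _)]

lemma condAvg_nonneg_s10 (P : Measure Z) {ℓ : Z → ℝ} (hℓ : ∀ z, 0 ≤ ℓ z) (A : Set Z) :
    0 ≤ condAvg P ℓ A :=
  div_nonneg (setIntegral_nonneg_of_ae_restrict (.of_forall hℓ)) ENNReal.toReal_nonneg

lemma measureReal_mul_condAvg (P : Measure Z) [IsFiniteMeasure P] (ℓ : Z → ℝ) (A : Set Z) :
    P.real A * condAvg P ℓ A = ∫ z in A, ℓ z ∂P := by
  rcases eq_or_ne (P A) 0 with hA | hA
  · simp [condAvg, hA, setIntegral_measure_zero]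
  · exact mul_div_cancel₀ _ (ENNReal.toReal_ne_zero.2 ⟨hA, measure_ne_top P A⟩)

lemma integral_stepFun_condAvg (P : Measure Z) [IsFiniteMeasure P] {Zpart : Fin K → Set Z}
    (hmeas : ∀ i, MeasurableSet (Zpart i)) (hdisj : Pairwise (Disjoint on Zpart))
    (hcover : ⋃ i, Zpart i = Set.univ) {ℓ : Z → ℝ} (hℓ : Integrable ℓ P) :
    ∫ z, stepFun Zpart (fun i => condAvg P ℓ (Zpart i)) z ∂P = ∫ z, ℓ z ∂P := by
  rw [integral_stepFun P hmeas, ← setIntegral_univ, ← hcover,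
    integral_iUnion_fintype hmeas hdisj fun i => hℓ.integrableOn]
  simp only [measureReal_mul_condAvg]

end Partition

theorem statement10_general {Z : Type*} [MeasurableSpace Z] (P : Measure Z) [IsProbabilityMeasure P]
    {K : ℕ} (Zpart : Fin K → Set Z)
    (hZmeas : ∀ i, MeasurableSet (Zpart i))
    (hZdisj : ∀ i j, i ≠ j → Disjoint (Zpart i) (Zpart j))
    (hZcover : (⋃ i, Zpart i) = Set.univ)
    (ℓ : Z → ℝ) (hℓmeas : Measurable ℓ) (hℓnonneg : ∀ z, 0 ≤ ℓ z)
    (hℓbdd : ∃ C, ∀ z, ℓ z ≤ C)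
    {n : ℕ} (hn : 0 < n)
    (ahat : ℝ) (hahat : IsGreatest (Set.range fun j => condAvg P ℓ (Zpart j)) ahat)
    (β : ℝ) (hβdef : β = 2 * ∑ j, (P (Zpart j)).toReal * condAvg P ℓ (Zpart j) ^ 2) (hβ : 0 < β)
    (δ : ℝ) (hδ : Real.exp (-((n : ℝ) * β) / (2 * ahat ^ 2)) ≤ δ) :
    ENNReal.ofReal (1 - δ) ≤
      (Measure.pi fun _ : Fin n => P)
        {S | (Real.sqrt (∑ i ∈ Tset S Zpart, ((cnt S (Zpart i) : ℝ) / n) * condAvg P ℓ (Zpart i)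
                  + ahat * Real.log (1 / δ) / n)
              - Real.sqrt (ahat * Real.log (1 / δ) / n)) ^ 2
            ≤ ∫ z, ℓ z ∂P} := by
  rcases le_or_gt 1 δ with hδ1 | hδ1
  · simp [ENNReal.ofReal_eq_zero.2 (sub_nonpos.2 hδ1)]
  have hδ0 : 0 < δ := (Real.exp_pos _).trans_le hδ
  have hnR : (0 : ℝ) < n := Nat.cast_pos.2 hn
  obtain ⟨C, hC⟩ := hℓbdd
  have hdisj : Pairwise (Disjoint on Zpart) := fun i j hij => hZdisj i j hij
  set a := fun i => condAvg P ℓ (Zpart i)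
  have ha : ∀ i, a i ∈ Set.Icc 0 ahat := fun i => ⟨condAvg_nonneg_s10 P hℓnonneg _, hahat.2 ⟨i, rfl⟩⟩
  have hg := stepFun_mem hdisj hZcover ha
  have hgm : ∫ z, stepFun Zpart a z ∂P = ∫ z, ℓ z ∂P :=
    integral_stepFun_condAvg P hZmeas hdisj hZcover (integrable_of_nonneg_of_le hℓmeas hℓnonneg hC)
  have hβm : β ≤ 2 * ahat * ∫ z, ℓ z ∂P := by
    have := sum_mul_sq_le_mul_sum univ (w := fun i => P.real (Zpart i))
      (fun i _ => measureReal_nonneg) fun i _ => ha i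
    rw [show β = 2 * ∑ i, P.real (Zpart i) * a i ^ 2 from hβdef, ← hgm, integral_stepFun P hZmeas]
    linarith
  have hahat0 : 0 < ahat := by nlinarith [integral_nonneg (μ := P) (f := ℓ) hℓnonneg]
  have hL : 0 < Real.log (1 / δ) := Real.log_pos (one_lt_one_div hδ0 hδ1)
  have key := ofReal_one_sub_exp_le_measure_sq_sqrt_add_sub_sqrt_le hn
    (measurable_stepFun hZmeas a) (fun z => (hg z).1) (fun z => (hg z).2) (by positivity)
    (hgm ▸ mul_log_one_div_div_le hnR hahat0 hδ0 hδ hβm)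
  have hexp : Real.exp (-(n * (ahat * Real.log (1 / δ) / n) / ahat)) = δ := by
    rw [mul_div_cancel₀ _ hnR.ne', mul_div_cancel_left₀ _ hahat0.ne', one_div, Real.log_inv,
      neg_neg, Real.exp_log hδ0]
  rw [hexp, hgm] at key
  refine key.trans (measure_mono fun S hS => ?_)
  simpa only [sum_Tset_cnt_div_mul] using hS

/-- Lower bound for the error of a fixed model. -/
theorem statement10 {Z : Type*} [MeasurableSpace Z] (P : Measure Z) [IsProbabilityMeasure P]
    {K : ℕ} (Zpart : Fin K → Set Z)
    (hZmeas : ∀ i, MeasurableSet (Zpart i))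
    (hZdisj : ∀ i j, i ≠ j → Disjoint (Zpart i) (Zpart j))
    (hZcover : (⋃ i, Zpart i) = Set.univ)
    (hZpos : ∀ i, 0 < P (Zpart i))
    (ℓ : Z → ℝ) (hℓmeas : Measurable ℓ) (hℓnonneg : ∀ z, 0 ≤ ℓ z)
    (hℓbdd : ∃ C, ∀ z, ℓ z ≤ C)
    {n : ℕ} (hn : 0 < n)
    (ahat : ℝ) (hahat : IsGreatest (Set.range fun j => condAvg P ℓ (Zpart j)) ahat)
    (β : ℝ) (hβdef : β = 2 * ∑ j, (P (Zpart j)).toReal * condAvg P ℓ (Zpart j) ^ 2) (hβ : 0 < β)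
    (δ : ℝ) (hδ : Real.exp (-((n : ℝ) * β) / (2 * ahat ^ 2)) ≤ δ) :
    ENNReal.ofReal (1 - δ) ≤
      (Measure.pi fun _ : Fin n => P)
        {S | (Real.sqrt (∑ i ∈ Tset S Zpart, ((cnt S (Zpart i) : ℝ) / n) * condAvg P ℓ (Zpart i)
                  + ahat * Real.log (1 / δ) / n)
              - Real.sqrt (ahat * Real.log (1 / δ) / n)) ^ 2
            ≤ ∫ z, ℓ z ∂P} :=
  statement10_general P Zpart hZmeas hZdisj hZcover ℓ hℓmeas hℓnonneg hℓbdd hn ahat hahat β hβdef hβ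
    δ hδ
end
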